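/- arXiv:2105.11991 — 2 statements merged into one kernel-verified Lean document; each statement's English description precedes it below -/
import Mathlib

section
/- (F-attack crack size, summed over groups.) Let F1 be an anonymization of a log L1 onto L1' and F2 an anonymization of a log L2 onto L2', both w.r.t. parameter n, let h be a continuation map from L1 to L2, and let bk be a list over A. For s ∈ S set g1'(s) = {q ∈ ms(L1', n, bk) | sens(q) = s} and g2'(s) = {q ∈ ms(L2', n, bk) | sens(q) = s}. Then the number of instances p ∈ L1 with bk ⊑ trace(p) is at most the sum, over the sensitive values s occurring in ms(L1', n, bk), of min(|g1'(s)|, |g2'(s)|). Consequently, at least Σ_s (|g1'(s)| − min(|g1'(s)|, |g2'(s)|)) instances of ms(L1', n, bk) are anonymizations of cases of L1 whose trace does not contain bk as a subsequence. -/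
/-- A simple process instance: a case identifier, a trace (list of activities),
and a sensitive attribute value. -/
structure Instance (C A S : Type*) where
  caseId : C
  trace : List A
  sens : S

variable {C A S : Type*}

/-- A simple event log: a finite set of instances with pairwise distinct case ids. -/
def IsLog (L : Set (Instance C A S)) : Prop :=
  L.Finite ∧ Set.InjOn Instance.caseId L

/-- The matching set of an anonymized log `L'` for background knowledge `bk` and
anonymization parameter `n`. -/
def ms (L' : Set (Instance C A S)) (n : ℕ) (bk : List A) : Set (Instance C A S) :=
  {p' ∈ L' | ∃ σ : List A, p'.trace.Sublist σ ∧ σ.length ≤ p'.trace.length + n ∧ bk.Sublist σ}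

/-- `F` is an anonymization of the log `L` onto the log `L'` w.r.t. parameter `n`. -/
def IsAnon (n : ℕ) (F : Instance C A S → Instance C A S)
    (L L' : Set (Instance C A S)) : Prop :=
  Set.BijOn F L L' ∧
    ∀ p ∈ L, (F p).trace.Sublist p.trace ∧
      p.trace.length ≤ (F p).trace.length + n ∧ (F p).sens = p.sens

/-- `h` is a continuation map from the log `L1` to the later log `L2`. -/
def IsCont (h : Instance C A S → Instance C A S)
    (L1 L2 : Set (Instance C A S)) : Prop :=
  Set.InjOn h L1 ∧ Set.MapsTo h L1 L2 ∧
    ∀ p ∈ L1, p.trace <+: (h p).trace ∧ (h p).sens = p.sens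

/-- Instances `q1` and `q2` are comparable w.r.t. the anonymization parameter `n`. -/
def Comparable (n : ℕ) (q1 q2 : Instance C A S) : Prop :=
  q1.sens = q2.sens ∧ ∃ τ1 τ2 : List A,
    q1.trace.Sublist τ1 ∧ τ1.length ≤ q1.trace.length + n ∧
    q2.trace.Sublist τ2 ∧ τ2.length ≤ q2.trace.length + n ∧
    τ1 <+: τ2

/-!
Sort the cases of `L1` whose trace contains `bk` by sensitive value. Such a case `p` lands in
`ms(L1', n, bk)` under `F1`, and in `ms(L2', n, bk)` under `F2 ∘ h`, since a continuation only
extends the trace; both maps are injective and keep `sens`, so each group has at most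
`min |g1'(s)| |g2'(s)|` elements. Conversely every element of `g1'(s)` is the image under `F1`
of either a case of that group or a case whose trace does not contain `bk`.
-/

theorem Set.ncard_eq_sum_ncard_fiberwise {α β : Type*} [DecidableEq β] {s : Set α}
    {f : α → β} {t : Finset β} (hs : s.Finite) (H : ∀ x ∈ s, f x ∈ t) :
    s.ncard = ∑ b ∈ t, {x ∈ s | f x = b}.ncard := by
  obtain ⟨s, rfl⟩ := hs.exists_finset_coe
  rw [Set.ncard_coe_finset, Finset.card_eq_sum_card_fiberwise H]
  refine Finset.sum_congr rfl fun b _ => ?_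
  rw [← Set.ncard_coe_finset, Finset.coe_filter]
  rfl

section

variable {n : ℕ} {F F1 F2 h : Instance C A S → Instance C A S}
  {L L' L1 L1' L2 L2' : Set (Instance C A S)}

theorem IsAnon.finite_of_finite (hF : IsAnon n F L L') (hL' : L'.Finite) : L.Finite :=
  Set.Finite.of_finite_image (hF.1.image_eq ▸ hL') hF.1.injOn

theorem IsAnon.mem_ms (hF : IsAnon n F L L') {p : Instance C A S} (hp : p ∈ L) {bk : List A}
    (hbk : bk.Sublist p.trace) : F p ∈ ms L' n bk :=
  ⟨hF.1.mapsTo hp, p.trace, (hF.2 p hp).1, (hF.2 p hp).2.1, hbk⟩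

theorem IsAnon.mapsTo_group (hF : IsAnon n F L L') (bk : List A) (s : S) :
    Set.MapsTo F {p ∈ {p ∈ L | bk.Sublist p.trace} | p.sens = s}
      {q ∈ ms L' n bk | q.sens = s} :=
  fun p ⟨⟨hp, hbk⟩, hs⟩ => ⟨hF.mem_ms hp hbk, (hF.2 p hp).2.2.trans hs⟩

theorem IsCont.mapsTo_group (hh : IsCont h L1 L2) (bk : List A) (s : S) :
    Set.MapsTo h {p ∈ {p ∈ L1 | bk.Sublist p.trace} | p.sens = s}
      {p ∈ {p ∈ L2 | bk.Sublist p.trace} | p.sens = s} :=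
  fun p ⟨⟨hp, hbk⟩, hs⟩ =>
    ⟨⟨hh.2.1 hp, hbk.trans (hh.2.2 p hp).1.sublist⟩, (hh.2.2 p hp).2.trans hs⟩

theorem ncard_group_le_min (hF1 : IsAnon n F1 L1 L1') (hF2 : IsAnon n F2 L2 L2')
    (hh : IsCont h L1 L2) (hL1' : L1'.Finite) (hL2' : L2'.Finite) (bk : List A) (s : S) :
    {p ∈ {p ∈ L1 | bk.Sublist p.trace} | p.sens = s}.ncard ≤
      min {q ∈ ms L1' n bk | q.sens = s}.ncard {q ∈ ms L2' n bk | q.sens = s}.ncard :=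
  le_min
    (Set.ncard_le_ncard_of_injOn F1 (hF1.mapsTo_group bk s)
      (hF1.1.injOn.mono fun _ hp => hp.1.1) (hL1'.subset fun _ hq => hq.1.1))
    (Set.ncard_le_ncard_of_injOn (F2 ∘ h) ((hF2.mapsTo_group bk s).comp (hh.mapsTo_group bk s))
      ((hF2.1.injOn.mono fun _ hp => hp.1.1).comp (hh.1.mono fun _ hp => hp.1.1)
        (hh.mapsTo_group bk s))
      (hL2'.subset fun _ hq => hq.1.1))

theorem IsAnon.group_subset_image_union (hF : IsAnon n F L L') (bk : List A) (s : S) :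
    {q ∈ ms L' n bk | q.sens = s} ⊆
      F '' {p ∈ {p ∈ L | bk.Sublist p.trace} | p.sens = s} ∪
        {q ∈ {q ∈ ms L' n bk | ∃ p ∈ L, F p = q ∧ ¬ bk.Sublist p.trace} |
          q.sens = s} := by
  rintro q ⟨hq, hs⟩
  obtain ⟨p, hp, rfl⟩ := hF.1.surjOn hq.1
  by_cases hbk : bk.Sublist p.trace
  · exact Or.inl ⟨p, ⟨⟨hp, hbk⟩, (hF.2 p hp).2.2.symm.trans hs⟩, rfl⟩
  · exact Or.inr ⟨⟨hq, p, hp, rfl, hbk⟩, hs⟩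

theorem IsAnon.ncard_group_le_add (hF : IsAnon n F L L') (hL' : L'.Finite) (bk : List A)
    (s : S) :
    {q ∈ ms L' n bk | q.sens = s}.ncard ≤
      {p ∈ {p ∈ L | bk.Sublist p.trace} | p.sens = s}.ncard +
        {q ∈ {q ∈ ms L' n bk | ∃ p ∈ L, F p = q ∧ ¬ bk.Sublist p.trace} |
          q.sens = s}.ncard := by
  have hL : L.Finite := hF.finite_of_finite hL'
  refine (Set.ncard_le_ncard (hF.group_subset_image_union bk s)
    (((hL.subset fun _ hp => hp.1.1).image F).union (hL'.subset fun _ hq => hq.1.1.1))).trans ?_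
  exact (Set.ncard_union_le _ _).trans
    (Nat.add_le_add_right (Set.ncard_image_le (hL.subset fun _ hp => hp.1.1)) _)

end

theorem f_attack_crack_size_sum_general (n : ℕ)
    (F1 F2 h : Instance C A S → Instance C A S)
    (L1 L1' L2 L2' : Set (Instance C A S))
    (hL1' : IsLog L1') (hL2' : IsLog L2')
    (hF1 : IsAnon n F1 L1 L1') (hF2 : IsAnon n F2 L2 L2')
    (hh : IsCont h L1 L2) (bk : List A)
    (hS : (Instance.sens '' ms L1' n bk).Finite) :
    ({p ∈ L1 | bk.Sublist p.trace}).ncard ≤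
        (∑ s ∈ hS.toFinset,
          min ({q ∈ ms L1' n bk | q.sens = s}).ncard
            ({q ∈ ms L2' n bk | q.sens = s}).ncard) ∧
      (∑ s ∈ hS.toFinset,
          (({q ∈ ms L1' n bk | q.sens = s}).ncard -
            min ({q ∈ ms L1' n bk | q.sens = s}).ncard
              ({q ∈ ms L2' n bk | q.sens = s}).ncard)) ≤
        ({q ∈ ms L1' n bk | ∃ p ∈ L1, F1 p = q ∧ ¬ bk.Sublist p.trace}).ncard := by
  classical
  have hsens_mem {q : Instance C A S} (hq : q ∈ ms L1' n bk) : q.sens ∈ hS.toFinset :=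
    hS.mem_toFinset.2 ⟨q, hq, rfl⟩
  constructor
  · rw [Set.ncard_eq_sum_ncard_fiberwise
      ((hF1.finite_of_finite hL1'.1).subset (Set.sep_subset _ _))
      fun p ⟨hp, hbk⟩ => (hF1.2 p hp).2.2 ▸ hsens_mem (hF1.mem_ms hp hbk)]
    exact Finset.sum_le_sum fun s _ => ncard_group_le_min hF1 hF2 hh hL1'.1 hL2'.1 bk s
  · rw [Set.ncard_eq_sum_ncard_fiberwise (hL1'.1.subset fun _ hq => hq.1.1)
      fun q hq => hsens_mem hq.1]
    refine Finset.sum_le_sum fun s _ => ?_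
    have hmin := ncard_group_le_min hF1 hF2 hh hL1'.1 hL2'.1 bk s
    have hcover := hF1.ncard_group_le_add hL1'.1 bk s
    omega

/-- F-attack crack size, summed over groups: the number of cases of `L1` matching the
background knowledge `bk` is at most the sum over sensitive values `s` occurring in the
matching set of `L1'` of `min |g1'(s)| |g2'(s)|`; hence at least
`Σ_s (|g1'(s)| - min |g1'(s)| |g2'(s)|)` instances of `ms(L1', n, bk)` are
anonymizations of cases of `L1` whose trace does not contain `bk`. -/
theorem f_attack_crack_size_sum (n : ℕ)
    (F1 F2 h : Instance C A S → Instance C A S)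
    (L1 L1' L2 L2' : Set (Instance C A S))
    (hL1 : IsLog L1) (hL1' : IsLog L1') (hL2 : IsLog L2) (hL2' : IsLog L2')
    (hF1 : IsAnon n F1 L1 L1') (hF2 : IsAnon n F2 L2 L2')
    (hh : IsCont h L1 L2) (bk : List A)
    (hS : (Instance.sens '' ms L1' n bk).Finite) :
    ({p ∈ L1 | bk.Sublist p.trace}).ncard ≤
        (∑ s ∈ hS.toFinset,
          min ({q ∈ ms L1' n bk | q.sens = s}).ncard
            ({q ∈ ms L2' n bk | q.sens = s}).ncard) ∧
      (∑ s ∈ hS.toFinset,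
          (({q ∈ ms L1' n bk | q.sens = s}).ncard -
            min ({q ∈ ms L1' n bk | q.sens = s}).ncard
              ({q ∈ ms L2' n bk | q.sens = s}).ncard)) ≤
        ({q ∈ ms L1' n bk | ∃ p ∈ L1, F1 p = q ∧ ¬ bk.Sublist p.trace}).ncard :=
  f_attack_crack_size_sum_general n F1 F2 h L1 L1' L2 L2' hL1' hL2' hF1 hF2 hh bk hS
end

section
/- (C-attack crack size, per group.) Let F1 be an anonymization of a log L1 onto L1' and F2 an anonymization of a log L2 onto L2', both w.r.t. parameter n, let h be a continuation map from L1 to L2, let bk be a list over A and s0 ∈ S, and set g1'(s0) = {q ∈ ms(L1', n, bk) | sens(q) = s0} and g2'(s0) = {q ∈ ms(L2', n, bk) | sens(q) = s0}. Then the number of instances q ∈ g2'(s0) for which there exists p ∈ L1 with F2(h(p)) = q and bk ⊑ trace(p) is at most min(|g1'(s0)|, |g2'(s0)|). Consequently, at least |g2'(s0)| − min(|g1'(s0)|, |g2'(s0)|) instances of g2'(s0) either are anonymizations of cases not in the image of h (i.e., cases that started after time t1) or are continuations of cases of L1 whose time-t1 trace does not contain bk as a subsequence. -/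
variable {C A S : Type*}

/-!
Every cracked instance `q = F2 (h p)` of the group `g2'(s0)` comes from a case `p ∈ L1` with
`bk ⊑ trace p` and `sens p = s0`. Its anonymization `F1 p` then lies in `g1'(s0)`, with `trace p`
itself witnessing the match, and `F1` is injective, so there are at most `|g1'(s0)|` such `q`.
The second bound counts the complement of the cracked instances inside `g2'(s0)`.
-/

/-- The paper's group `g'(s0)` of `ms L' n bk`. -/
def sensGroup (L' : Set (Instance C A S)) (n : ℕ) (bk : List A) (s0 : S) :
    Set (Instance C A S) :=
  {q ∈ ms L' n bk | q.sens = s0}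

theorem sensGroup_finite {L' : Set (Instance C A S)} (hL' : L'.Finite) (n : ℕ) (bk : List A)
    (s0 : S) : (sensGroup L' n bk s0).Finite :=
  hL'.subset fun _ hq => hq.1.1

namespace IsAnon

variable {n : ℕ} {F : Instance C A S → Instance C A S} {L L' : Set (Instance C A S)}

theorem sens_eq (hF : IsAnon n F L L') {p : Instance C A S} (hp : p ∈ L) :
    (F p).sens = p.sens :=
  (hF.2 p hp).2.2

theorem mem_ms_s11 (hF : IsAnon n F L L') {p : Instance C A S} (hp : p ∈ L) {bk : List A}
    (hbk : bk.Sublist p.trace) : F p ∈ ms L' n bk :=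
  ⟨hF.1.mapsTo hp, p.trace, (hF.2 p hp).1, (hF.2 p hp).2.1, hbk⟩

theorem image_subset_sensGroup (hF : IsAnon n F L L') (bk : List A) (s0 : S) :
    F '' {p ∈ L | bk.Sublist p.trace ∧ p.sens = s0} ⊆ sensGroup L' n bk s0 := by
  rintro _ ⟨p, ⟨hp, hbk, hs⟩, rfl⟩
  exact ⟨hF.mem_ms_s11 hp hbk, (hF.sens_eq hp).trans hs⟩

end IsAnon

theorem ncard_cracked_le_ncard_sensGroup {n : ℕ} {F1 F2 h : Instance C A S → Instance C A S}
    {L1 L1' L2 L2' : Set (Instance C A S)} (hL1' : L1'.Finite) (hF1 : IsAnon n F1 L1 L1')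
    (hF2 : IsAnon n F2 L2 L2') (hh : IsCont h L1 L2) (bk : List A) (s0 : S) :
    {q ∈ ms L2' n bk | q.sens = s0 ∧ ∃ p ∈ L1, F2 (h p) = q ∧ bk.Sublist p.trace}.ncard ≤
      (sensGroup L1' n bk s0).ncard := by
  set P := {p ∈ L1 | bk.Sublist p.trace ∧ p.sens = s0}
  have hG1 := sensGroup_finite hL1' n bk s0
  have hinj : Set.InjOn F1 P := hF1.1.injOn.mono fun _ hp => hp.1
  have hP : P.Finite := (hG1.subset (hF1.image_subset_sensGroup bk s0)).of_finite_image hinj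
  have hcracked : {q ∈ ms L2' n bk | q.sens = s0 ∧ ∃ p ∈ L1, F2 (h p) = q ∧ bk.Sublist p.trace}
      ⊆ (F2 ∘ h) '' P := by
    rintro _ ⟨-, hs, p, hp, rfl, hbk⟩
    refine ⟨p, ⟨hp, hbk, ?_⟩, rfl⟩
    rw [← hs, hF2.sens_eq (hh.2.1 hp), (hh.2.2 p hp).2]
  calc _ ≤ ((F2 ∘ h) '' P).ncard := Set.ncard_le_ncard hcracked (hP.image _)
    _ ≤ P.ncard := Set.ncard_image_le hP
    _ = (F1 '' P).ncard := hinj.ncard_image.symm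
    _ ≤ _ := Set.ncard_le_ncard (hF1.image_subset_sensGroup bk s0) hG1

theorem c_attack_crack_size_general (n : ℕ)
    (F1 F2 h : Instance C A S → Instance C A S)
    (L1 L1' L2 L2' : Set (Instance C A S))
    (hL1' : IsLog L1') (hL2' : IsLog L2')
    (hF1 : IsAnon n F1 L1 L1') (hF2 : IsAnon n F2 L2 L2')
    (hh : IsCont h L1 L2) (bk : List A) (s0 : S) :
    ({q ∈ ms L2' n bk | q.sens = s0 ∧
          ∃ p ∈ L1, F2 (h p) = q ∧ bk.Sublist p.trace}).ncard ≤
        min ({q ∈ ms L1' n bk | q.sens = s0}).ncard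
          ({q ∈ ms L2' n bk | q.sens = s0}).ncard ∧
      ({q ∈ ms L2' n bk | q.sens = s0}).ncard -
          min ({q ∈ ms L1' n bk | q.sens = s0}).ncard
            ({q ∈ ms L2' n bk | q.sens = s0}).ncard ≤
        ({q ∈ ms L2' n bk | q.sens = s0 ∧
            ((∀ p ∈ L1, F2 (h p) ≠ q) ∨
              ∃ p ∈ L1, F2 (h p) = q ∧ ¬ bk.Sublist p.trace)}).ncard := by
  set T := {q ∈ ms L2' n bk | q.sens = s0 ∧ ∃ p ∈ L1, F2 (h p) = q ∧ bk.Sublist p.trace}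
  have hG2 := sensGroup_finite hL2'.1 n bk s0
  have hTG2 : T ⊆ sensGroup L2' n bk s0 := fun _ hq => ⟨hq.1, hq.2.1⟩
  have hT : T.ncard ≤ min (sensGroup L1' n bk s0).ncard (sensGroup L2' n bk s0).ncard :=
    le_min (ncard_cracked_le_ncard_sensGroup hL1'.1 hF1 hF2 hh bk s0)
      (Set.ncard_le_ncard hTG2 hG2)
  refine ⟨hT, ?_⟩
  have hcompl : sensGroup L2' n bk s0 \ T ⊆ {q ∈ ms L2' n bk | q.sens = s0 ∧
      ((∀ p ∈ L1, F2 (h p) ≠ q) ∨ ∃ p ∈ L1, F2 (h p) = q ∧ ¬ bk.Sublist p.trace)} := by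
    rintro q ⟨⟨hms, hs⟩, hqT⟩
    refine ⟨hms, hs, ?_⟩
    by_cases hpre : ∃ p ∈ L1, F2 (h p) = q
    · obtain ⟨p, hp, rfl⟩ := hpre
      exact Or.inr ⟨p, hp, rfl, fun hbk => hqT ⟨hms, hs, p, hp, rfl, hbk⟩⟩
    · exact Or.inl fun p hp hpq => hpre ⟨p, hp, hpq⟩
  calc _ ≤ (sensGroup L2' n bk s0).ncard - T.ncard := Nat.sub_le_sub_left hT _
    _ ≤ (sensGroup L2' n bk s0 \ T).ncard := Set.le_ncard_sdiff _ _ (hG2.subset hTG2)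
    _ ≤ _ := Set.ncard_le_ncard hcompl (hL2'.1.subset fun _ hq => hq.1.1)

/-- C-attack crack size, per group: at most `min |g1'(s0)| |g2'(s0)|` instances of the
group `g2'(s0)` are anonymized continuations of cases of `L1` matching the background
knowledge `bk`; hence at least `|g2'(s0)| - min |g1'(s0)| |g2'(s0)|` instances of
`g2'(s0)` either are anonymizations of cases not continuing a case of `L1` (i.e., cases
started after time `t1`) or are continuations of cases of `L1` whose time-`t1` trace
does not contain `bk`. -/
theorem c_attack_crack_size (n : ℕ)
    (F1 F2 h : Instance C A S → Instance C A S)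
    (L1 L1' L2 L2' : Set (Instance C A S))
    (hL1 : IsLog L1) (hL1' : IsLog L1') (hL2 : IsLog L2) (hL2' : IsLog L2')
    (hF1 : IsAnon n F1 L1 L1') (hF2 : IsAnon n F2 L2 L2')
    (hh : IsCont h L1 L2) (bk : List A) (s0 : S) :
    ({q ∈ ms L2' n bk | q.sens = s0 ∧
          ∃ p ∈ L1, F2 (h p) = q ∧ bk.Sublist p.trace}).ncard ≤
        min ({q ∈ ms L1' n bk | q.sens = s0}).ncard
          ({q ∈ ms L2' n bk | q.sens = s0}).ncard ∧
      ({q ∈ ms L2' n bk | q.sens = s0}).ncard -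
          min ({q ∈ ms L1' n bk | q.sens = s0}).ncard
            ({q ∈ ms L2' n bk | q.sens = s0}).ncard ≤
        ({q ∈ ms L2' n bk | q.sens = s0 ∧
            ((∀ p ∈ L1, F2 (h p) ≠ q) ∨
              ∃ p ∈ L1, F2 (h p) = q ∧ ¬ bk.Sublist p.trace)}).ncard :=
  c_attack_crack_size_general n F1 F2 h L1 L1' L2 L2' hL1' hL2' hF1 hF2 hh bk s0
end
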